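/- Let ψ : ℝ^{k-1} → ℝ be the template of a nonnegative PERM loss L, and suppose ψ is semi-coercive. Then for every p in the interior of the probability simplex Δ^k, the conditional risk C_p(z) := Σ_{y=1}^k p_y ψ(ρ_y z) is a coercive function of z ∈ ℝ^{k-1} (all sublevel sets are bounded). -/
import Mathlib


open Matrix

/- Convention: the label set `[k]` (`k = n+1`) is modeled by `Fin (n+1)` with index `0`
playing the role of the class `k`. -/

/-- The matrix label code `ρ_y`. -/
def rho (n : ℕ) (y : Fin (n + 1)) : Matrix (Fin n) (Fin n) ℝ :=
  Matrix.of fun i j => if j.succ = y then -1 else if i = j then 1 else 0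

lemma rho_zero_mulVec (n : ℕ) (z : Fin n → ℝ) : (rho n 0).mulVec z = z := by
  funext i
  simp [rho, Matrix.mulVec, dotProduct, Fin.succ_ne_zero]

lemma rho_succ_mulVec_self (n : ℕ) (m : Fin n) (z : Fin n → ℝ) :
    (rho n m.succ).mulVec z m = -z m := by
  simp only [rho, Matrix.mulVec, dotProduct, Matrix.of_apply]
  rw [Finset.sum_eq_single m]
  · simp
  · intro j _ hj
    have : ¬ (j.succ = m.succ) := by simpa [Fin.succ_inj] using hj
    simp [this, Ne.symm hj]
  · simp

/-- Let `ψ` be the (nonnegative) semi-coercive template of a PERM loss. Then for every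
`p` in the interior of the probability simplex `Δ^k`, the conditional risk
`C_p(z) = Σ_y p_y ψ(ρ_y z)` is coercive: all of its sublevel sets are bounded. -/
theorem conditional_risk_coercive (n : ℕ) (ψ : (Fin n → ℝ) → ℝ)
    (hnonneg : ∀ z, 0 ≤ ψ z)
    (hsc : ∀ c : ℝ, ∃ b : ℝ, ∀ z : Fin n → ℝ, ψ z ≤ c → ∀ j, b ≤ z j)
    (p : Fin (n + 1) → ℝ)
    (hp : ∀ y, 0 < p y) (hp1 : ∑ y, p y = 1) :
    ∀ c : ℝ,
      Bornology.IsBounded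
        {z : Fin n → ℝ | ∑ y : Fin (n + 1), p y * ψ ((rho n y).mulVec z) ≤ c} := by
  intro c
  set b : Fin (n + 1) → ℝ := fun y => Classical.choose (hsc (c / p y)) with hb
  have hbspec : ∀ y, ∀ z : Fin n → ℝ, ψ z ≤ c / p y → ∀ j, b y ≤ z j :=
    fun y => Classical.choose_spec (hsc (c / p y))
  set lo : ℝ := b 0 with hlo
  set hi : ℝ := Finset.univ.sup' Finset.univ_nonempty (fun y : Fin (n+1) => -(b y)) with hhi
  have hsub : {z : Fin n → ℝ | ∑ y : Fin (n + 1), p y * ψ ((rho n y).mulVec z) ≤ c}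
      ⊆ Set.Icc (fun _ => lo) (fun _ => hi) := by
    intro z hz
    have hterm : ∀ y, ψ ((rho n y).mulVec z) ≤ c / p y := by
      intro y
      have h1 : p y * ψ ((rho n y).mulVec z) ≤ c :=
        le_trans (Finset.single_le_sum (f := fun i => p i * ψ ((rho n i).mulVec z))
          (fun i _ => mul_nonneg (hp i).le (hnonneg _)) (Finset.mem_univ y)) hz
      rw [le_div_iff₀ (hp y), mul_comm]
      exact h1
    constructor
    · intro j
      have := hbspec 0 _ (hterm 0) j
      rwa [rho_zero_mulVec] at this
    · intro j
      have h2 := hbspec j.succ _ (hterm j.succ) j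
      rw [rho_succ_mulVec_self] at h2
      have : -(b j.succ) ≤ hi := by
        rw [hhi]; exact Finset.le_sup' (fun y : Fin (n+1) => -(b y)) (Finset.mem_univ j.succ)
      linarith
  exact (isCompact_Icc.isBounded).subset hsub
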